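/- arXiv:1410.0635 — 4 statements merged into one kernel-verified Lean document; each statement's English description precedes it below -/
import Mathlib

section
/- The polynomial Q₂ = (∑ᵢ (xᵢ*)²)(∑ᵢ (vᵢ*)²) − (∑ᵢ xᵢ*vᵢ*)² on gal(n)* is invariant under the coadjoint action of Gal(n), and equals ‖x*‖²·‖proj_{(x*)^⊥}(v*)‖² whenever x* ≠ 0. -/
/-- A point of `gal(n)*`, written as a tuple `(K*, v*, x*, x₀*)`. -/
abbrev GalDual (n : ℕ) :=
  Matrix (Fin n) (Fin n) ℝ × (Fin n → ℝ) × (Fin n → ℝ) × ℝ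

/-- Coadjoint action of the rotation `ρ`: `(K*,v*,x*,x₀*) ↦ (ρK*ρ⁻¹, ρv*, ρx*, x₀*)`. -/
noncomputable def coadjRot {n : ℕ} (ρ : Matrix (Fin n) (Fin n) ℝ) (p : GalDual n) :
    GalDual n :=
  (ρ * p.1 * ρ⁻¹, ρ.mulVec p.2.1, ρ.mulVec p.2.2.1, p.2.2.2)

/-- Coadjoint action of the translation-boost `(v, x, x₀)` (computed modulo `gal(n)^⊥`). -/
noncomputable def coadjTB {n : ℕ} (v x : Fin n → ℝ) (x₀ : ℝ) (p : GalDual n) : GalDual n :=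
  (p.1 + Matrix.of (fun i j =>
      (1 / 2) * ((p.2.1 i * v j + p.2.2.1 i * x j) - (v i * p.2.1 j + x i * p.2.2.1 j))),
    fun i => p.2.1 i + x₀ * p.2.2.1 i,
    p.2.2.1,
    p.2.2.2 + ∑ i, v i * p.2.2.1 i)

/-- The polynomial `Q₂ = (∑(xᵢ*)²)(∑(vᵢ*)²) − (∑ xᵢ*vᵢ*)²` on `gal(n)*`. -/
def Q2 {n : ℕ} (p : GalDual n) : ℝ :=
  (∑ i, (p.2.2.1 i) ^ 2) * (∑ i, (p.2.1 i) ^ 2) - (∑ i, p.2.2.1 i * p.2.1 i) ^ 2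

/-!
`Q₂` is the Gram determinant `(x*·x*)(v*·v*) − (x*·v*)²` of the pair `(x*, v*)`. Rotations act on
both vectors by the same orthogonal matrix and so preserve all their dot products; a
translation-boost fixes `x*` and only adds a multiple of `x*` to `v*`, which does not change a Gram
determinant. Splitting `v*` into its components along `x*` and orthogonal to it gives the last
formula.
-/

open Matrix

section GramDet

variable {ι m R : Type*} [Fintype ι]

def gramDet [CommRing R] (a b : ι → R) : R :=
  (a ⬝ᵥ a) * (b ⬝ᵥ b) - (a ⬝ᵥ b) ^ 2

theorem gramDet_add_smul_right [CommRing R] (a b : ι → R) (c : R) :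
    gramDet a (b + c • a) = gramDet a b := by
  simp only [gramDet, dotProduct_add, add_dotProduct, dotProduct_smul, smul_dotProduct,
    smul_eq_mul, dotProduct_comm b a]
  ring

theorem dotProduct_mulVec_mulVec_of_transpose_mul_self [Fintype m] [DecidableEq ι]
    [CommSemiring R] {A : Matrix m ι R} (hA : Aᵀ * A = 1) (a b : ι → R) :
    A *ᵥ a ⬝ᵥ A *ᵥ b = a ⬝ᵥ b := by
  rw [dotProduct_mulVec, ← vecMul_transpose, vecMul_vecMul, hA, vecMul_one]

theorem gramDet_mulVec_of_transpose_mul_self [Fintype m] [DecidableEq ι] [CommRing R]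
    {A : Matrix m ι R} (hA : Aᵀ * A = 1) (a b : ι → R) :
    gramDet (A *ᵥ a) (A *ᵥ b) = gramDet a b := by
  simp only [gramDet, dotProduct_mulVec_mulVec_of_transpose_mul_self hA]

theorem gramDet_eq_mul_dotProduct_self_sub_proj [Field R] {a : ι → R} (ha : a ⬝ᵥ a ≠ 0)
    (b : ι → R) :
    gramDet a b = (a ⬝ᵥ a) *
      ((b - (b ⬝ᵥ a / a ⬝ᵥ a) • a) ⬝ᵥ (b - (b ⬝ᵥ a / a ⬝ᵥ a) • a)) := by
  simp only [gramDet, dotProduct_sub, sub_dotProduct, dotProduct_smul, smul_dotProduct,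
    smul_eq_mul, dotProduct_comm a b]
  field_simp
  ring

end GramDet

theorem Q2_eq_gramDet {n : ℕ} (p : GalDual n) : Q2 p = gramDet p.2.2.1 p.2.1 := by
  simp only [Q2, gramDet, dotProduct, sq]

/-- `Q₂` is invariant under the coadjoint action of `Gal(n)`, and when `x* ≠ 0` it equals
`‖x*‖² · ‖proj_{(x*)^⊥}(v*)‖²`, where `proj_{(x*)^⊥}` is the orthogonal projection onto
the hyperplane orthogonal to `x*`. -/
theorem Q2_coadjoint_invariant (n : ℕ) :
    (∀ (ρ : Matrix (Fin n) (Fin n) ℝ), ρ ∈ Matrix.orthogonalGroup (Fin n) ℝ →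
      ∀ p : GalDual n, Q2 (coadjRot ρ p) = Q2 p) ∧
    (∀ (v x : Fin n → ℝ) (x₀ : ℝ) (p : GalDual n), Q2 (coadjTB v x x₀ p) = Q2 p) ∧
    (∀ p : GalDual n, p.2.2.1 ≠ 0 →
      Q2 p = (∑ i, (p.2.2.1 i) ^ 2) *
        ∑ i, (p.2.1 i -
          ((∑ j, p.2.1 j * p.2.2.1 j) / (∑ j, (p.2.2.1 j) ^ 2)) * p.2.2.1 i) ^ 2) := by
  refine ⟨fun ρ hρ p => ?_, fun v x x₀ p => ?_, fun p hp => ?_⟩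
  · rw [Q2_eq_gramDet, Q2_eq_gramDet]
    exact gramDet_mulVec_of_transpose_mul_self ((mem_orthogonalGroup_iff' (Fin n) ℝ).mp hρ) _ _
  · rw [Q2_eq_gramDet, Q2_eq_gramDet]
    exact gramDet_add_smul_right p.2.2.1 p.2.1 x₀
  · rw [Q2_eq_gramDet, gramDet_eq_mul_dotProduct_self_sub_proj
      (mt dotProduct_self_eq_zero.mp hp)]
    simp only [dotProduct, Pi.sub_apply, Pi.smul_apply, smul_eq_mul, sq]
end

section
/- For n = 1, the algebra of polynomials on gal(1)* invariant under the coadjoint action of Gal(1) is generated by X₁², i.e., every invariant polynomial in (v₁*, x₁*, x₀*) is a polynomial in (x₁*)². -/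
/-!
A boost moves every point with `x₁* ≠ 0` onto the `x₁*`-axis, so an invariant polynomial agrees
off the hyperplane `x₁* = 0`, hence everywhere, with `q(x₁*)` where `q` is its restriction to
that axis. The reflection makes `q` even, i.e. a polynomial in `(x₁*)²`; conversely `(x₁*)²` is
fixed by both actions.
-/

open MvPolynomial

namespace Polynomial

variable {R : Type*}

theorem expand_contract_two_of_comp_neg_X [CommRing R] [NoZeroDivisors R] [CharZero R]
    {q : R[X]} (hq : q.comp (-X) = q) : expand R 2 (contract 2 q) = q := by
  ext n
  rw [coeff_expand two_pos, coeff_contract two_ne_zero]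
  split_ifs with hn
  · rw [Nat.div_mul_cancel hn]
  · have hodd : Odd n := Nat.odd_iff.mpr (Nat.two_dvd_ne_zero.mp hn)
    have hneg : -q.coeff n = q.coeff n := by
      simpa [hodd.neg_one_pow, hq] using (comp_C_mul_X_coeff (p := q) (r := -1) (n := n)).symm
    exact (CharZero.neg_eq_self_iff.mp hneg).symm

end Polynomial

namespace MvPolynomial

variable {σ R : Type*}

theorem polynomial_eval_aeval [CommRing R] (g : σ → Polynomial R) (P : MvPolynomial σ R)
    (b : R) : (aeval g P).eval b = eval (fun i => (g i).eval b) P := by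
  rw [← Polynomial.coe_aeval_eq_eval, comp_aeval_apply]
  rfl

theorem eval_polynomial_aeval [CommRing R] (x : σ → R) (p : MvPolynomial σ R)
    (r : Polynomial R) : eval x (Polynomial.aeval p r) = r.eval (eval x p) := by
  simpa using (Polynomial.aeval_algHom_apply (aeval x) p r).symm

/-- Off a coordinate hyperplane is still a box with infinite sides. -/
theorem funext_of_ne_zero [CommRing R] [IsDomain R] [Infinite R] {p q : MvPolynomial σ R}
    (j : σ) (h : ∀ x : σ → R, x j ≠ 0 → eval x p = eval x q) : p = q := by
  classical
  refine funext_set (Function.update (fun _ => Set.univ) j {0}ᶜ) (fun i => ?_) fun x hx => ?_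
  · rcases eq_or_ne i j with rfl | hij
    · simpa using (Set.finite_singleton (0 : R)).infinite_compl
    · simpa [hij] using Set.infinite_univ
  · simpa using h x (by simpa using hx j (Set.mem_univ j))

end MvPolynomial

section Gal1

variable {K : Type*}

noncomputable def restrictX1 [CommRing K] (P : MvPolynomial (Fin 3) K) : Polynomial K :=
  aeval ![0, Polynomial.X, 0] P

theorem eval_restrictX1 [CommRing K] (P : MvPolynomial (Fin 3) K) (b : K) :
    (restrictX1 P).eval b = eval ![0, b, 0] P := by
  rw [restrictX1, polynomial_eval_aeval]
  congr 2
  funext i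
  fin_cases i <;> simp

theorem eq_aeval_restrictX1_of_boost_invariant [Field K] [Infinite K] {P : MvPolynomial (Fin 3) K}
    (hP : ∀ (v₁ x₀ : K) (pt : Fin 3 → K),
      eval ![pt 0 + x₀ * pt 1, pt 1, pt 2 + v₁ * pt 1] P = eval pt P) :
    P = Polynomial.aeval (X 1) (restrictX1 P) := by
  refine funext_of_ne_zero 1 fun pt hpt => ?_
  have hmove := hP (-pt 2 / pt 1) (-pt 0 / pt 1) pt
  rw [div_mul_cancel₀ _ hpt, div_mul_cancel₀ _ hpt, add_neg_cancel, add_neg_cancel] at hmove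
  rw [eval_polynomial_aeval, eval_X, eval_restrictX1, hmove]

theorem restrictX1_comp_neg_X_of_reflection_invariant [CommRing K] [IsDomain K] [Infinite K]
    {P : MvPolynomial (Fin 3) K}
    (hP : ∀ pt : Fin 3 → K, eval ![-pt 0, -pt 1, pt 2] P = eval pt P) :
    (restrictX1 P).comp (-Polynomial.X) = restrictX1 P := by
  refine Polynomial.funext fun b => ?_
  simpa [eval_restrictX1] using hP ![0, b, 0]

end Gal1

/-- For `n = 1`:  the algebra of polynomials on `gal(1)*` invariant under the coadjoint
action of `Gal(1)` is generated by `X₁²`.  Points of `gal(1)*` are written `(v₁*, x₁*, x₀*)`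
(coordinates `0, 1, 2`); the coadjoint action of the reflection `−1 ∈ O(1)` is
`(v₁*, x₁*, x₀*) ↦ (−v₁*, −x₁*, x₀*)` and of the translation-boost `(v₁, x₁, x₀)` is
`(v₁*, x₁*, x₀*) ↦ (v₁* + x₀x₁*, x₁*, x₀* + v₁x₁*)`.  A polynomial `P` is invariant under
the coadjoint action if and only if it is a polynomial in `(x₁*)²`. -/
theorem gal1_invariants (P : MvPolynomial (Fin 3) ℝ) :
    ((∀ pt : Fin 3 → ℝ,
        eval (![-pt 0, -pt 1, pt 2]) P = eval pt P) ∧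
     (∀ (v₁ x₀ : ℝ) (pt : Fin 3 → ℝ),
        eval (![pt 0 + x₀ * pt 1, pt 1, pt 2 + v₁ * pt 1]) P = eval pt P)) ↔
    P ∈ Algebra.adjoin ℝ {(X 1 : MvPolynomial (Fin 3) ℝ) ^ 2} := by
  rw [Algebra.adjoin_singleton_eq_range_aeval, AlgHom.mem_range]
  constructor
  · rintro ⟨hreflection, hboost⟩
    refine ⟨Polynomial.contract 2 (restrictX1 P), ?_⟩
    rw [← Polynomial.expand_aeval, Polynomial.expand_contract_two_of_comp_neg_X
      (restrictX1_comp_neg_X_of_reflection_invariant hreflection)]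
    exact (eq_aeval_restrictX1_of_boost_invariant hboost).symm
  · rintro ⟨r, rfl⟩
    exact ⟨fun _ => by simp [eval_polynomial_aeval], fun _ _ _ => by simp [eval_polynomial_aeval]⟩
end

section
/- Let A : V₁ → V₂ be a linear map between finite-dimensional vector spaces with chosen bases. The matrix entry of the k-th exterior power Λᵏ A in position (e_{i₁}∧⋯∧e_{i_k}, f_{j₁}∧⋯∧f_{j_k}) equals the determinant of the k×k submatrix of the matrix of A formed from rows j₁,…,j_k and columns i₁,…,i_k. In particular, for an endomorphism A of an n-dimensional space, the coefficient of x^{n−k} in the characteristic polynomial of A equals ±tr(Λᵏ A). -/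
/-!
Expanding each `A (e_{i_t}) = ∑_j a_{j i_t} f_j` multilinearly, the coordinates of
`A e_{i₁} ∧ ⋯ ∧ A e_{i_k}` in the wedge basis of `Λᵏ V₂` are the maximal minors of the coordinate
matrix of these vectors, which are the stated minors of the matrix of `A`. The second claim is the
expansion of `det(xI − B)` by multilinearity in its rows into principal minors.
-/

open ExteriorAlgebra Module Set.powersetCard

theorem Finset.sum_powersetCard_eq_sum_dite {α β : Type*} [Fintype α] [AddCommMonoid β] (k : ℕ)
    (f : Set.powersetCard α k → β) :
    ∑ s, f s = ∑ s : Finset α, if h : s.card = k then f (ofCard h) else 0 := by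
  classical
  rw [← Finset.sum_filter_add_sum_filter_not Finset.univ (fun s : Finset α => s.card = k),
    Finset.sum_eq_zero (s := Finset.univ.filter _) fun s hs => dif_neg (Finset.mem_filter.1 hs).2,
    add_zero, Finset.sum_subtype (p := (· ∈ Set.powersetCard α k)) _
      (by simp [Set.powersetCard.mem_iff])]
  exact Finset.sum_congr rfl fun s _ => by rw [dif_pos (Set.powersetCard.mem_iff.1 s.2)]; rfl

theorem ExteriorAlgebra.ιMulti_eq_sum_minors_smul {R M I : Type*} [CommRing R] [AddCommGroup M]
    [Module R M] [LinearOrder I] [Fintype I] (b : Basis I R M) {k : ℕ} (v : Fin k → M) :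
    ιMulti R k v = ∑ s : Set.powersetCard I k,
      ((b.toMatrix v).submatrix (ofFinEmbEquiv.symm s) id).det • ιMulti_family R k b s := by
  rw [← exteriorPower.ιMulti_apply_coe,
    ← (b.exteriorPower k).sum_repr (exteriorPower.ιMulti R k v), Submodule.coe_sum]
  refine Finset.sum_congr rfl fun s _ => ?_
  rw [Submodule.coe_smul, exteriorPower.basis_repr_apply, exteriorPower.ιMultiDual_apply_ιMulti,
    ← Matrix.det_transpose, exteriorPower.basis_apply]
  rfl

theorem Module.Basis.toMatrix_linearMap_comp {R M₁ M₂ ι₁ ι₂ κ : Type*} [CommSemiring R]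
    [AddCommMonoid M₁] [Module R M₁] [AddCommMonoid M₂] [Module R M₂] [Fintype ι₁] [Finite ι₂]
    [DecidableEq ι₁] (b₁ : Basis ι₁ R M₁) (b₂ : Basis ι₂ R M₂) (f : M₁ →ₗ[R] M₂) (c : κ → ι₁) :
    b₂.toMatrix (fun t => f (b₁ (c t))) = (LinearMap.toMatrix b₁ b₂ f).submatrix id c := by
  ext j t
  exact (LinearMap.toMatrix_apply b₁ b₂ f j (c t)).symm

theorem Matrix.det_submatrix_orderEmbOfFin {ι R : Type*} [LinearOrder ι] [CommRing R]
    (M : Matrix ι ι R) (s : Finset ι) {k : ℕ} (h : s.card = k) :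
    (M.submatrix (s.orderEmbOfFin h) (s.orderEmbOfFin h)).det =
      (M.submatrix ((↑) : s → ι) (↑)).det := by
  rw [← Matrix.det_submatrix_equiv_self (s.orderIsoOfFin h).toEquiv]
  congr 1

theorem Matrix.charpoly_coeff_sub_eq_sum_dite_minors {R : Type*} [CommRing R] {N : ℕ}
    (B : Matrix (Fin N) (Fin N) R) {K : ℕ} (hK : K ≤ N) :
    B.charpoly.coeff (N - K) =
      (-1) ^ K * ∑ s : Finset (Fin N),
        if h : s.card = K then (B.submatrix (s.orderEmbOfFin h) (s.orderEmbOfFin h)).det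
        else 0 := by
  have hminors := B.charpoly_coeff_eq_sum_minors K (by simpa using hK)
  rw [Fintype.card_fin] at hminors
  rw [hminors, Finset.powersetCard_eq_filter, Finset.powerset_univ, Finset.sum_filter]
  congr 1
  refine Finset.sum_congr rfl fun s _ => ?_
  split_ifs with h
  · exact (B.det_submatrix_orderEmbOfFin s h).symm
  · rfl

theorem exterior_power_minors_and_charpoly_general
    (m n k : ℕ) (V₁ V₂ : Type*) [AddCommGroup V₁] [Module ℝ V₁]
    [AddCommGroup V₂] [Module ℝ V₂]
    (b₁ : Module.Basis (Fin m) ℝ V₁) (b₂ : Module.Basis (Fin n) ℝ V₂)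
    (A : V₁ →ₗ[ℝ] V₂) (i : Fin k → Fin m) :
    (ExteriorAlgebra.map A (ExteriorAlgebra.ιMulti ℝ k fun t => b₁ (i t)) =
      ∑ s : Finset (Fin n),
        if h : s.card = k then
          ((LinearMap.toMatrix b₁ b₂ A).submatrix
              (fun t : Fin k => s.orderEmbOfFin h t) i).det •
            ExteriorAlgebra.ιMulti ℝ k (fun t => b₂ (s.orderEmbOfFin h t))
        else 0) ∧
    (∀ (N K : ℕ), K ≤ N → ∀ B : Matrix (Fin N) (Fin N) ℝ,
      B.charpoly.coeff (N - K) =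
        (-1) ^ K * ∑ s : Finset (Fin N),
          if h : s.card = K then
            (B.submatrix (fun t : Fin K => s.orderEmbOfFin h t)
              (fun t => s.orderEmbOfFin h t)).det
          else 0) := by
  refine ⟨?_, fun N K hK B => B.charpoly_coeff_sub_eq_sum_dite_minors hK⟩
  rw [map_apply_ιMulti, ιMulti_eq_sum_minors_smul b₂, Finset.sum_powersetCard_eq_sum_dite]
  refine Finset.sum_congr rfl fun s _ => ?_
  split_ifs
  · rw [Function.comp_def, Basis.toMatrix_linearMap_comp, Matrix.submatrix_submatrix]
    rfl
  · rfl

/-- (1) For a linear map `A : V₁ → V₂` and bases `b₁`, `b₂`, the matrix entry of the `k`-th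
exterior power `Λᵏ A` in position `(e_{i₁}∧⋯∧e_{i_k}, f_{j₁}∧⋯∧f_{j_k})` is the `k×k`
minor of the matrix of `A` with rows `j₁,…,j_k` and columns `i₁,…,i_k`:  equivalently,
`Λᵏ A (e_{i₁}∧⋯∧e_{i_k})` expands in the wedge basis of `Λᵏ V₂` with these minors as
coefficients.  (2) For an endomorphism of an `N`-dimensional space with matrix `B`, the
coefficient of `x^{N−K}` in `charpoly(B) = det(xI − B)` is
`(−1)^K tr(Λᵏ B)`, where `tr(Λᵏ B)` is the sum of all principal `K×K` minors of `B`. -/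
theorem exterior_power_minors_and_charpoly
    (m n k : ℕ) (V₁ V₂ : Type*) [AddCommGroup V₁] [Module ℝ V₁]
    [AddCommGroup V₂] [Module ℝ V₂]
    (b₁ : Module.Basis (Fin m) ℝ V₁) (b₂ : Module.Basis (Fin n) ℝ V₂)
    (A : V₁ →ₗ[ℝ] V₂) (i : Fin k → Fin m) (hi : StrictMono i) :
    (ExteriorAlgebra.map A (ExteriorAlgebra.ιMulti ℝ k fun t => b₁ (i t)) =
      ∑ s : Finset (Fin n),
        if h : s.card = k then
          ((LinearMap.toMatrix b₁ b₂ A).submatrix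
              (fun t : Fin k => s.orderEmbOfFin h t) i).det •
            ExteriorAlgebra.ιMulti ℝ k (fun t => b₂ (s.orderEmbOfFin h t))
        else 0) ∧
    (∀ (N K : ℕ), K ≤ N → ∀ B : Matrix (Fin N) (Fin N) ℝ,
      B.charpoly.coeff (N - K) =
        (-1) ^ K * ∑ s : Finset (Fin N),
          if h : s.card = K then
            (B.submatrix (fun t : Fin K => s.orderEmbOfFin h t)
              (fun t => s.orderEmbOfFin h t)).det
          else 0) :=
  exterior_power_minors_and_charpoly_general m n k V₁ V₂ b₁ b₂ A i
end

section
/- Let K' = [[K*, v*, x*],[−v*ᵀ, 0, 0],[−x*ᵀ, 0, 0]] be skew-symmetric with K* ∈ so(n), v*,x* ∈ ℝⁿ, v*∧x* ≠ 0, and set ω = (v*∧x*)/‖v*∧x*‖. Then the coefficient of e_{n+1}∧e_{n+2} in (Λ²K')ω equals ‖v*∧x*‖, i.e., equals √((‖x*‖²‖v*‖² − (x*·v*)²)). -/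
/-! The last two rows of `K'` are `-v*ᵀ` and `-x*ᵀ` (padded by zeros), so the `2×2` minor of
`(K'v*, K'x*)` in the last two coordinates is the Gram determinant
`(v*·v*)(x*·x*) − (x*·v*)² = ‖v* ∧ x*‖²`, and dividing it by its square root leaves
`‖v* ∧ x*‖`. -/

/-- The skew-symmetric matrix `K' = [[K*, v*, x*],[−v*ᵀ, 0, 0],[−x*ᵀ, 0, 0]]`. -/
def Kprime (n : ℕ) (K : Matrix (Fin n) (Fin n) ℝ) (v x : Fin n → ℝ) :
    Matrix (Fin (n + 2)) (Fin (n + 2)) ℝ :=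
  Matrix.of fun i j =>
    if hi : i.val < n then
      if hj : j.val < n then K ⟨i.val, hi⟩ ⟨j.val, hj⟩
      else if j.val = n then v ⟨i.val, hi⟩
      else x ⟨i.val, hi⟩
    else if hj : j.val < n then
      (if i.val = n then -v ⟨j.val, hj⟩ else -x ⟨j.val, hj⟩)
    else 0

/-- The inclusion `ℝⁿ ⊆ ℝ^{n+2}` as the span of the first `n` standard basis vectors. -/
def embRn (n : ℕ) (w : Fin n → ℝ) : Fin (n + 2) → ℝ :=
  fun i => if h : i.val < n then w ⟨i.val, h⟩ else 0

open Matrix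

theorem Kprime_mulVec_embRn_apply_n (n : ℕ) (K : Matrix (Fin n) (Fin n) ℝ) (v x w : Fin n → ℝ) :
    (Kprime n K v x *ᵥ embRn n w) ⟨n, by simp⟩ = -(v ⬝ᵥ w) := by
  simp [Kprime, embRn, mulVec, dotProduct, Fin.sum_univ_castSucc]

theorem Kprime_mulVec_embRn_apply_n_add_one (n : ℕ) (K : Matrix (Fin n) (Fin n) ℝ)
    (v x w : Fin n → ℝ) :
    (Kprime n K v x *ᵥ embRn n w) ⟨n + 1, by simp⟩ = -(x ⬝ᵥ w) := by
  simp [Kprime, embRn, mulVec, dotProduct, Fin.sum_univ_castSucc]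

/-- Let `K' = [[K*, v*, x*],[−v*ᵀ, 0, 0],[−x*ᵀ, 0, 0]]` with `K* ∈ so(n)` and `v* ∧ x* ≠ 0`,
and let `ω = (v* ∧ x*)/‖v* ∧ x*‖`.  Since `(Λ²K')ω = ‖v*∧x*‖⁻¹ · (K'v* ∧ K'x*)`, the
coefficient of `e_{n+1} ∧ e_{n+2}` in `(Λ²K')ω` — i.e. `‖v*∧x*‖⁻¹` times the
`2×2` minor of the pair `(K'v*, K'x*)` in the last two coordinates — equals
`‖v* ∧ x*‖ = √(‖x*‖²‖v*‖² − (x*·v*)²)`. -/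
theorem Kprime_wedge_omega_coefficient (n : ℕ) (K : Matrix (Fin n) (Fin n) ℝ)
    (v x : Fin n → ℝ) :
    (Real.sqrt ((∑ i, (x i) ^ 2) * (∑ i, (v i) ^ 2) - (∑ i, x i * v i) ^ 2))⁻¹ *
      ((Kprime n K v x).mulVec (embRn n v) ⟨n, by omega⟩ *
        (Kprime n K v x).mulVec (embRn n x) ⟨n + 1, by omega⟩ -
       (Kprime n K v x).mulVec (embRn n v) ⟨n + 1, by omega⟩ *
        (Kprime n K v x).mulVec (embRn n x) ⟨n, by omega⟩) =
    Real.sqrt ((∑ i, (x i) ^ 2) * (∑ i, (v i) ^ 2) - (∑ i, x i * v i) ^ 2) := by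
  have gram_minor : -(v ⬝ᵥ v) * -(x ⬝ᵥ x) - -(x ⬝ᵥ v) * -(v ⬝ᵥ x) =
      (∑ i, (x i) ^ 2) * (∑ i, (v i) ^ 2) - (∑ i, x i * v i) ^ 2 := by
    rw [dotProduct_comm v x]
    simp only [dotProduct, sq]
    ring
  rw [Kprime_mulVec_embRn_apply_n, Kprime_mulVec_embRn_apply_n_add_one,
    Kprime_mulVec_embRn_apply_n_add_one, Kprime_mulVec_embRn_apply_n, gram_minor,
    inv_mul_eq_div, Real.div_sqrt]
end
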